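/- Let V be a finite-dimensional real vector space, B a real skew-symmetric bilinear form on V, and L ≤ (V ⊕ V*) ⊗ ℂ a maximal isotropic subspace with L ∩ L̄ = 0. Then the B-transformed subspace L_B := {A + ξ − B(A,·) : A + ξ ∈ L} is again maximal isotropic and satisfies L_B ∩ L̄_B = 0. -/

import Mathlib

/-- The canonical symmetric pairing on `(V ⊕ V*) ⊗ ℂ`, modelled as `W × W*` for
`W = V ⊗ ℂ`: `⟨A₁+ξ, A₂+η⟩ = ½(ξ(A₂) + η(A₁))`. -/
noncomputable def gcPair {W : Type*} [AddCommGroup W] [Module ℂ W]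
    (p q : W × Module.Dual ℂ W) : ℂ :=
  (p.2 q.1 + q.2 p.1) / 2

/-- Complex conjugation on the dual `(V* ⊗ ℂ)`, induced by a conjugation `cj` on `W = V ⊗ ℂ`:
`(cjDual cj ξ)(w) = conj (ξ (cj w))`. -/
noncomputable def cjDual {W : Type*} [AddCommGroup W] [Module ℂ W]
    (cj : W →ₛₗ[starRingEnd ℂ] W) (ξ : Module.Dual ℂ W) : Module.Dual ℂ W where
  toFun w := starRingEnd ℂ (ξ (cj w))
  map_add' x y := by simp
  map_smul' c x := by simp [map_smulₛₗ]

/-- The B-field transformation on `(V ⊕ V*) ⊗ ℂ`: `A + ξ ↦ A + ξ − B(A,·)`, for the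
complexification `B` of a real skew form. -/
noncomputable def eBc {W : Type*} [AddCommGroup W] [Module ℂ W]
    (B : W →ₗ[ℂ] W →ₗ[ℂ] ℂ) : (W × Module.Dual ℂ W) →ₗ[ℂ] (W × Module.Dual ℂ W) :=
  (LinearMap.fst ℂ W (Module.Dual ℂ W)).prod
    (LinearMap.snd ℂ W (Module.Dual ℂ W) - B.comp (LinearMap.fst ℂ W (Module.Dual ℂ W)))

/-- Let `L ≤ (V ⊕ V*) ⊗ ℂ` be maximal isotropic with `L ∩ L̄ = 0`, and `B` a
real skew-symmetric bilinear form on `V` (complexified: skew and conjugation-compatible). Then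
`L_B = {A + ξ − B(A,·) : A + ξ ∈ L}` is again maximal isotropic and `L_B ∩ L̄_B = 0`.
Here `W = V ⊗ ℂ` carries the conjugation `cj` (an involutive antilinear map), conjugation on
`W × W*` is `p ↦ (cj p.1, cjDual cj p.2)`, and `L ∩ L̄ = 0` is expressed as: every `p ∈ L`
whose conjugate also lies in `L` is `0`. -/
theorem stmt2 {W : Type*} [AddCommGroup W] [Module ℂ W] [FiniteDimensional ℂ W]
    (cj : W →ₛₗ[starRingEnd ℂ] W) (hcj : ∀ x, cj (cj x) = x)
    (L : Submodule ℂ (W × Module.Dual ℂ W))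
    (hiso : ∀ p ∈ L, ∀ q ∈ L, gcPair p q = 0)
    (hmax : Module.finrank ℂ L = Module.finrank ℂ W)
    (hLLbar : ∀ p ∈ L, (cj p.1, cjDual cj p.2) ∈ L → p = 0)
    (B : W →ₗ[ℂ] W →ₗ[ℂ] ℂ)
    (hBskew : ∀ x y, B x y = - B y x)
    (hBreal : ∀ x y, B (cj x) (cj y) = starRingEnd ℂ (B x y)) :
    (∀ p ∈ Submodule.map (eBc B) L, ∀ q ∈ Submodule.map (eBc B) L, gcPair p q = 0) ∧
      Module.finrank ℂ (Submodule.map (eBc B) L) = Module.finrank ℂ W ∧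
      ∀ p ∈ Submodule.map (eBc B) L,
        (cj p.1, cjDual cj p.2) ∈ Submodule.map (eBc B) L → p = 0 := by
  have hinv : ∀ p : W × Module.Dual ℂ W, eBc (-B) (eBc B p) = p := by
    intro p
    simp [eBc, sub_sub_cancel]
  have hinj : Function.Injective (eBc B) := by
    intro p q h
    have := congrArg (eBc (-B)) h
    rwa [hinv, hinv] at this
  have hpair : ∀ p q, gcPair (eBc B p) (eBc B q) = gcPair p q := by
    intro p q
    simp only [gcPair, eBc, LinearMap.prod_apply, Function.prod, LinearMap.coe_comp,
      Function.comp_apply, LinearMap.fst_apply, LinearMap.snd_apply, LinearMap.sub_apply]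
    have := hBskew p.1 q.1
    ring_nf
    rw [this]
    ring
  have hconj : ∀ p : W × Module.Dual ℂ W,
      ((cj (eBc B p).1, cjDual cj (eBc B p).2) : W × Module.Dual ℂ W)
        = eBc B (cj p.1, cjDual cj p.2) := by
    intro p
    refine Prod.ext rfl ?_
    ext w
    simp only [eBc, LinearMap.prod_apply, Function.prod, LinearMap.coe_comp, Function.comp_apply,
      LinearMap.fst_apply, LinearMap.snd_apply, LinearMap.sub_apply, cjDual,
      LinearMap.coe_mk, AddHom.coe_mk]
    have : B (cj p.1) w = starRingEnd ℂ (B p.1 (cj w)) := by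
      have := hBreal p.1 (cj w)
      rwa [hcj] at this
    rw [this, map_sub]
  refine ⟨?_, ?_, ?_⟩
  · rintro p ⟨p', hp', rfl⟩ q ⟨q', hq', rfl⟩
    rw [hpair]; exact hiso p' hp' q' hq'
  · have hinv' : ∀ p : W × Module.Dual ℂ W, eBc B (eBc (-B) p) = p := by
      intro p; simp [eBc, sub_add_cancel]
    let e : (W × Module.Dual ℂ W) ≃ₗ[ℂ] (W × Module.Dual ℂ W) :=
      LinearEquiv.ofLinear (eBc B) (eBc (-B))
        (LinearMap.ext hinv') (LinearMap.ext hinv)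
    have : Submodule.map (eBc B) L = Submodule.map (e : _ →ₗ[ℂ] _) L := rfl
    rw [this, LinearEquiv.finrank_map_eq, hmax]
  · rintro p ⟨p', hp', rfl⟩ hcp
    rw [hconj] at hcp
    obtain ⟨q', hq', hq⟩ := hcp
    have : (cj p'.1, cjDual cj p'.2) ∈ L := by
      rw [← hinj hq]; exact hq'
    rw [hLLbar p' hp' this, map_zero]
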